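/- Under the assumptions that each stochastic gradient g_j(x_j) has variance bounded by M + M_V‖∇F(x_j)‖², that ‖x_i - x_j‖ ≤ D for all i, j, that ∇F is L-Lipschitz, and that the stepsizes satisfy 0 < α_j ≤ α_0, the variance of v_k = -∑_{j=1}^{k} α_j γ^{k-j} g_j(x_j) (with independent gradient noise across iterations) satisfies Var[v_k] ≤ (1/(1-γ²)) α_0² (M + 2 M_V ‖∇F(x_k)‖² + 2 M_V L² D²). -/

import Mathlib

/-!
Each summand of `Var[v_k]` is at most `α₀² (γ²)^(k-j)` times a uniform bound on the gradient
variances, and the geometric weights sum to at most `1 / (1 - γ²)`. The uniform bound compares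
every `∇F(x_j)` with `∇F(x_k)`: by Lipschitz continuity and the diameter bound they differ by at
most `L D`, so `‖∇F(x_j)‖² ≤ 2‖∇F(x_k)‖² + 2 L² D²`.
-/

open Finset

lemma sum_Icc_pow_sub_le {r : ℝ} (hr₀ : 0 ≤ r) (hr₁ : r < 1) (k : ℕ) :
    ∑ j ∈ Icc 1 k, r ^ (k - j) ≤ 1 / (1 - r) := by
  have hreflect : ∑ j ∈ Icc 1 k, r ^ (k - j) = ∑ i ∈ Ico 0 k, r ^ i := by
    rw [← Ico_add_one_right_eq_Icc, sum_Ico_reflect _ _ le_rfl]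
    simp
  simpa [hreflect] using geom_sum_Ico_le_of_lt_one (m := 0) (n := k) hr₀ hr₁

lemma sq_norm_le_two_mul_sq_add_two_mul_sq_norm_sub {E : Type*} [SeminormedAddCommGroup E]
    (a b : E) : ‖a‖ ^ 2 ≤ 2 * ‖b‖ ^ 2 + 2 * ‖a - b‖ ^ 2 := by
  have htri : ‖a‖ ≤ ‖b‖ + ‖a - b‖ := by
    simpa using norm_add_le b (a - b)
  nlinarith [norm_nonneg a, sq_nonneg (‖b‖ - ‖a - b‖)]

lemma sq_norm_le_of_norm_sub_le_mul {X E : Type*} [SeminormedAddCommGroup X]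
    [SeminormedAddCommGroup E] {f : X → E} {L D : ℝ} {a b : X}
    (hf : ‖f a - f b‖ ≤ L * ‖a - b‖) (hab : ‖a - b‖ ≤ D) :
    ‖f a‖ ^ 2 ≤ 2 * ‖f b‖ ^ 2 + 2 * L ^ 2 * D ^ 2 := by
  have hdiff : ‖f a - f b‖ ^ 2 ≤ L ^ 2 * D ^ 2 :=
    calc ‖f a - f b‖ ^ 2 ≤ (L * ‖a - b‖) ^ 2 := pow_le_pow_left₀ (norm_nonneg _) hf 2
      _ = L ^ 2 * ‖a - b‖ ^ 2 := mul_pow _ _ _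
      _ ≤ L ^ 2 * D ^ 2 := by gcongr
  linarith [sq_norm_le_two_mul_sq_add_two_mul_sq_norm_sub (f a) (f b)]

lemma sum_Icc_sq_mul_pow_mul_le {α V : ℕ → ℝ} {γ α₀ C : ℝ} (k : ℕ) (hγ : γ ^ 2 < 1)
    (hC : 0 ≤ C) (hα : ∀ j ∈ Icc 1 k, |α j| ≤ α₀) (hV : ∀ j ∈ Icc 1 k, 0 ≤ V j ∧ V j ≤ C) :
    ∑ j ∈ Icc 1 k, (α j * γ ^ (k - j)) ^ 2 * V j ≤ 1 / (1 - γ ^ 2) * α₀ ^ 2 * C := by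
  have hterm : ∀ j ∈ Icc 1 k,
      (α j * γ ^ (k - j)) ^ 2 * V j ≤ α₀ ^ 2 * C * (γ ^ 2) ^ (k - j) := by
    intro j hj
    obtain ⟨hV₀, hVC⟩ := hV j hj
    have hαsq : α j ^ 2 ≤ α₀ ^ 2 := sq_le_sq' (abs_le.mp (hα j hj)).1 (abs_le.mp (hα j hj)).2
    calc (α j * γ ^ (k - j)) ^ 2 * V j = α j ^ 2 * V j * (γ ^ 2) ^ (k - j) := by ring
      _ ≤ α₀ ^ 2 * C * (γ ^ 2) ^ (k - j) := by gcongr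
  calc ∑ j ∈ Icc 1 k, (α j * γ ^ (k - j)) ^ 2 * V j
      ≤ ∑ j ∈ Icc 1 k, α₀ ^ 2 * C * (γ ^ 2) ^ (k - j) := sum_le_sum hterm
    _ = α₀ ^ 2 * C * ∑ j ∈ Icc 1 k, (γ ^ 2) ^ (k - j) := (mul_sum _ _ _).symm
    _ ≤ α₀ ^ 2 * C * (1 / (1 - γ ^ 2)) := by
        gcongr
        exact sum_Icc_pow_sub_le (sq_nonneg γ) hγ k
    _ = 1 / (1 - γ ^ 2) * α₀ ^ 2 * C := by ring

/-- `V j` is the variance of `g_j(x_j)`; independence of the gradient noise across iterations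
enters only through `hVar`. -/
theorem variance_bound_exponential_general {d : ℕ} (F : EuclideanSpace ℝ (Fin d) → ℝ)
    (L γ M MV D α₀ : ℝ) (x : ℕ → EuclideanSpace ℝ (Fin d)) (α V Varv : ℕ → ℝ) (k : ℕ)
    (hγ : γ ∈ Set.Ioo (0 : ℝ) 1) (hMV : 0 ≤ MV)
    (hlip : ∀ x y : EuclideanSpace ℝ (Fin d),
      ‖gradient F x - gradient F y‖ ≤ L * ‖x - y‖)
    (hVnonneg : ∀ j, 0 ≤ V j)
    (hV : ∀ j, V j ≤ M + MV * ‖gradient F (x j)‖ ^ 2)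
    (hD : ∀ i j, ‖x i - x j‖ ≤ D)
    (hα : ∀ j, 0 < α j ∧ α j ≤ α₀)
    (hVar : Varv k = ∑ j ∈ Finset.Icc 1 k, (α j * γ ^ (k - j)) ^ 2 * V j) :
    Varv k ≤ 1 / (1 - γ ^ 2) * α₀ ^ 2 *
      (M + 2 * MV * ‖gradient F (x k)‖ ^ 2 + 2 * MV * L ^ 2 * D ^ 2) := by
  set C := M + 2 * MV * ‖gradient F (x k)‖ ^ 2 + 2 * MV * L ^ 2 * D ^ 2
  have hVC : ∀ j, V j ≤ C := fun j =>
    calc V j ≤ M + MV * ‖gradient F (x j)‖ ^ 2 := hV j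
      _ ≤ M + MV * (2 * ‖gradient F (x k)‖ ^ 2 + 2 * L ^ 2 * D ^ 2) := by
          gcongr
          exact sq_norm_le_of_norm_sub_le_mul (hlip _ _) (hD j k)
      _ = C := by ring
  have hγsq : γ ^ 2 < 1 := by nlinarith [hγ.1, hγ.2]
  have hαabs : ∀ j ∈ Icc 1 k, |α j| ≤ α₀ := fun j _ => abs_le.mpr
    ⟨by linarith [(hα j).1, (hα j).2], (hα j).2⟩
  rw [hVar]
  exact sum_Icc_sq_mul_pow_mul_le k hγsq ((hVnonneg k).trans (hVC k)) hαabs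
    fun j _ => ⟨hVnonneg j, hVC j⟩

/-- Variance bound for the momentum direction with a fixed exponential decay factor
`γ ∈ (0,1)` (Theorem 2 of the paper).  `V j` denotes the variance of the stochastic
gradient `g_j(x_j)`; independence across iterations is encoded by the hypothesis
`hVar`, stating `Var[v_k] = ∑_j (α_j γ^{k-j})² Var[g_j]`. -/
theorem variance_bound_exponential {d : ℕ} (F : EuclideanSpace ℝ (Fin d) → ℝ)
    (L γ M MV D α₀ : ℝ) (x : ℕ → EuclideanSpace ℝ (Fin d)) (α V Varv : ℕ → ℝ) (k : ℕ)
    (hL : 0 ≤ L) (hγ : γ ∈ Set.Ioo (0 : ℝ) 1) (hM : 0 ≤ M) (hMV : 0 ≤ MV)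
    (hdiff : Differentiable ℝ F)
    (hlip : ∀ x y : EuclideanSpace ℝ (Fin d),
      ‖gradient F x - gradient F y‖ ≤ L * ‖x - y‖)
    (hVnonneg : ∀ j, 0 ≤ V j)
    (hV : ∀ j, V j ≤ M + MV * ‖gradient F (x j)‖ ^ 2)
    (hD : ∀ i j, ‖x i - x j‖ ≤ D)
    (hα : ∀ j, 0 < α j ∧ α j ≤ α₀)
    (hVar : Varv k = ∑ j ∈ Finset.Icc 1 k, (α j * γ ^ (k - j)) ^ 2 * V j) :
    Varv k ≤ 1 / (1 - γ ^ 2) * α₀ ^ 2 *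
      (M + 2 * MV * ‖gradient F (x k)‖ ^ 2 + 2 * MV * L ^ 2 * D ^ 2) :=
  variance_bound_exponential_general F L γ M MV D α₀ x α V Varv k hγ hMV hlip hVnonneg hV hD hα hVar
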